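/- arXiv:1212.6037 — 2 statements merged into one kernel-verified Lean document; each statement's English description precedes it below -/
import Mathlib

section
/- Let A and M be real symmetric positive definite n×n matrices and γ a real number. Then A + i γ M (as a complex matrix) is invertible, and for every real vector w, the real part of (A + i γ M)⁻¹ w equals (A + γ² M A⁻¹ M)⁻¹ w. -/
/-! With `C = A + γ² M A⁻¹ M`, positive definite, the matrix `C⁻¹ - iγ A⁻¹ M C⁻¹` is a right
inverse of `A + iγ M`: its product has real part `A C⁻¹ + γ² M A⁻¹ M C⁻¹ = C C⁻¹ = 1` and
imaginary part `γ (M C⁻¹ - A A⁻¹ M C⁻¹) = 0`. On a real vector `w` the real part of its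
action is therefore `C⁻¹ w`. -/

open Matrix Complex

namespace Matrix

variable {ι : Type*} [Fintype ι]

theorem map_ofReal_add_I_smul_mul (P Q R S : Matrix ι ι ℝ) :
    (P.map ofReal + I • Q.map ofReal) * (R.map ofReal + I • S.map ofReal) =
      (P * R - Q * S).map ofReal + I • (P * S + Q * R).map ofReal := by
  have hmul : ∀ X Y : Matrix ι ι ℝ, (X * Y).map ofReal = X.map ofReal * Y.map ofReal :=
    fun X Y => Matrix.map_mul (f := ofRealHom)
  simp only [Matrix.map_sub _ ofReal_sub, Matrix.map_add _ ofReal_add, hmul, add_mul, mul_add,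
    smul_mul_assoc, mul_smul_comm, smul_smul, I_mul_I, neg_smul, one_smul, smul_add]
  abel

theorem re_map_ofReal_add_I_smul_mulVec (R S : Matrix ι ι ℝ) (w : ι → ℝ) (i : ι) :
    (((R.map ofReal + I • S.map ofReal) *ᵥ fun j => (w j : ℂ)) i).re = (R *ᵥ w) i := by
  simp [mulVec, dotProduct, re_sum]

variable [DecidableEq ι]

theorem inv_map_ofReal_add_I_smul {P Q R S : Matrix ι ι ℝ}
    (hre : P * R - Q * S = 1) (him : P * S + Q * R = 0) :
    IsUnit (P.map ofReal + I • Q.map ofReal) ∧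
      (P.map ofReal + I • Q.map ofReal)⁻¹ = R.map ofReal + I • S.map ofReal := by
  have h : (P.map ofReal + I • Q.map ofReal) * (R.map ofReal + I • S.map ofReal) = 1 := by
    rw [map_ofReal_add_I_smul_mul, hre, him, Matrix.map_zero _ ofReal_zero, smul_zero,
      add_zero, Matrix.map_one _ ofReal_zero ofReal_one]
  exact ⟨.of_mul_eq_one _ h, inv_eq_right_inv h⟩

open scoped ComplexOrder in
theorem PosDef.add_smul_mul_inv_mul {𝕜 : Type*} [RCLike 𝕜] {A M : Matrix ι ι 𝕜}
    (hA : A.PosDef) (hM : M.IsHermitian) {c : ℝ} (hc : 0 ≤ c) :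
    (A + c • (M * A⁻¹ * M)).PosDef := by
  refine hA.add_posSemidef (PosSemidef.smul ?_ hc)
  simpa only [hM.eq] using hA.inv.posSemidef.mul_mul_conjTranspose_same M

end Matrix

theorem stmt_1 {n : ℕ} (A M : Matrix (Fin n) (Fin n) ℝ)
    (hA : A.PosDef) (hM : M.PosDef) (γ : ℝ) :
    IsUnit (A.map (Complex.ofReal) + Complex.I • γ • M.map (Complex.ofReal)) ∧
    ∀ (w : Fin n → ℝ) (i : Fin n),
      (((A.map (Complex.ofReal) + Complex.I • γ • M.map (Complex.ofReal))⁻¹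
          *ᵥ fun j => (w j : ℂ)) i).re
        = ((A + γ ^ 2 • (M * A⁻¹ * M))⁻¹ *ᵥ w) i := by
  set C := A + γ ^ 2 • (M * A⁻¹ * M)
  have hC : IsUnit C.det :=
    (isUnit_iff_isUnit_det C).mp (hA.add_smul_mul_inv_mul hM.isHermitian (sq_nonneg γ)).isUnit
  have hA' : IsUnit A.det := (isUnit_iff_isUnit_det A).mp hA.isUnit
  have hre : A * C⁻¹ - (γ • M) * (-γ • (A⁻¹ * M * C⁻¹)) = 1 := by
    rw [← mul_nonsing_inv C hC]
    simp only [C, add_mul, smul_mul_assoc, mul_smul_comm, Matrix.mul_assoc]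
    module
  have him : A * (-γ • (A⁻¹ * M * C⁻¹)) + (γ • M) * C⁻¹ = 0 := by
    rw [mul_smul_comm, Matrix.mul_assoc, mul_nonsing_inv_cancel_left (h := hA'), smul_mul_assoc]
    module
  have hγM : (γ • M).map ofReal = γ • M.map ofReal := Matrix.map_smul _ _ (fun _ => by simp) M
  obtain ⟨hunit, hinv⟩ := inv_map_ofReal_add_I_smul hre him
  rw [hγM] at hunit hinv
  exact ⟨hunit, fun w i => by rw [hinv, re_map_ofReal_add_I_smul_mulVec]⟩
end

section
/- In a real Hilbert space H, let P : H → H be a bounded linear projection (P² = P) with P ≠ 0 and P ≠ id. Then the operator norms satisfy ‖id − P‖ = ‖P‖. -/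
/-!
Write `c = ‖P‖`, `a = P x` and `b = x - P x`. Since `P (a + t • b) = a` for every real `t`,
`‖a‖ ≤ c ‖a + t • b‖`; minimising over `t` bounds the angle between `range P` and `ker P`:
`⟪a, b⟫² ≤ (1 - 1/c²) ‖a‖² ‖b‖²`. This bound is symmetric in `a` and `b`, and read the other
way it gives `‖b‖ ≤ c ‖a + b‖`, i.e. `‖(1 - P) x‖ ≤ ‖P‖ ‖x‖`. Exchanging the roles of `P` and
`1 - P` gives the reverse inequality.
-/

open ContinuousLinearMap RealInnerProductSpace

theorem IsIdempotentElem.one_le_norm {R : Type*} [NormedRing R] {p : R}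
    (hp : IsIdempotentElem p) (hp0 : p ≠ 0) : 1 ≤ ‖p‖ := by
  have hpos : 0 < ‖p‖ := norm_pos_iff.mpr hp0
  have : ‖p‖ ≤ ‖p‖ * ‖p‖ := by simpa only [hp.eq] using norm_mul_le p p
  nlinarith

theorem sq_add_two_mul_add_nonneg_of_sq_le {c α β γ : ℝ} (hc : 1 ≤ c)
    (h : c ^ 2 * γ ^ 2 ≤ (c ^ 2 - 1) * α ^ 2 * β ^ 2) :
    0 ≤ c ^ 2 * α ^ 2 + 2 * c ^ 2 * γ + (c ^ 2 - 1) * β ^ 2 := by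
  set X := c ^ 2 * α ^ 2 + (c ^ 2 - 1) * β ^ 2
  have hc2 : 0 ≤ c ^ 2 - 1 := by nlinarith
  have hX : 0 ≤ X := by positivity
  have hAMGM : 4 * c ^ 2 * ((c ^ 2 - 1) * α ^ 2 * β ^ 2) ≤ X ^ 2 := by
    nlinarith [sq_nonneg (c ^ 2 * α ^ 2 - (c ^ 2 - 1) * β ^ 2)]
  nlinarith [sq_nonneg (2 * c ^ 2 * γ + X)]

section

variable {E : Type*} [NormedAddCommGroup E] [InnerProductSpace ℝ E]

theorem norm_le_mul_norm_add_of_forall_norm_le {a b : E} {c : ℝ} (hc : 1 ≤ c)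
    (h : ∀ t : ℝ, ‖a‖ ≤ c * ‖a + t • b‖) : ‖b‖ ≤ c * ‖a + b‖ := by
  rcases eq_or_ne b 0 with rfl | hb
  · simpa using mul_nonneg (zero_le_one.trans hc) (norm_nonneg a)
  have hβ : 0 < ‖b‖ := norm_pos_iff.mpr hb
  set γ := ⟪a, b⟫
  have hmin : ‖a + (-γ / ‖b‖ ^ 2) • b‖ ^ 2 = ‖a‖ ^ 2 - γ ^ 2 / ‖b‖ ^ 2 := by
    rw [norm_add_sq_real, inner_smul_right, norm_smul, mul_pow, Real.norm_eq_abs, sq_abs]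
    field_simp
    ring
  have hangle : c ^ 2 * γ ^ 2 ≤ (c ^ 2 - 1) * ‖a‖ ^ 2 * ‖b‖ ^ 2 := by
    have := pow_le_pow_left₀ (norm_nonneg a) (h (-γ / ‖b‖ ^ 2)) 2
    rw [mul_pow, hmin] at this
    have := mul_le_mul_of_nonneg_right this (sq_nonneg ‖b‖)
    field_simp at this
    nlinarith
  have hsq : ‖b‖ ^ 2 ≤ (c * ‖a + b‖) ^ 2 := by
    rw [mul_pow, norm_add_sq_real]
    nlinarith [sq_add_two_mul_add_nonneg_of_sq_le hc hangle]
  exact abs_le_of_sq_le_sq' hsq (by positivity) |>.2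

theorem ContinuousLinearMap.norm_one_sub_le_norm_of_isIdempotentElem {P : E →L[ℝ] E}
    (hP : IsIdempotentElem P) (hP0 : P ≠ 0) : ‖1 - P‖ ≤ ‖P‖ := by
  refine opNorm_le_bound _ (norm_nonneg P) fun x ↦ ?_
  have hPx : P (P x) = P x := congr($hP x)
  have hrange : ∀ t : ℝ, ‖P x‖ ≤ ‖P‖ * ‖P x + t • (x - P x)‖ := fun t ↦ by
    simpa [hPx] using P.le_opNorm (P x + t • (x - P x))
  simpa using norm_le_mul_norm_add_of_forall_norm_le (hP.one_le_norm hP0) hrange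

end

theorem stmt_10_general {H : Type*} [NormedAddCommGroup H] [InnerProductSpace ℝ H]
    (P : H →L[ℝ] H) (hP : P.comp P = P)
    (hP0 : P ≠ 0) (hPid : P ≠ ContinuousLinearMap.id ℝ H) :
    ‖ContinuousLinearMap.id ℝ H - P‖ = ‖P‖ := by
  have hidem : IsIdempotentElem P := hP
  have hQ0 : (1 : H →L[ℝ] H) - P ≠ 0 := sub_ne_zero.mpr (Ne.symm hPid)
  refine le_antisymm (norm_one_sub_le_norm_of_isIdempotentElem hidem hP0) ?_
  have hQ := norm_one_sub_le_norm_of_isIdempotentElem hidem.one_sub hQ0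
  rwa [sub_sub_cancel] at hQ

theorem stmt_10 {H : Type*} [NormedAddCommGroup H] [InnerProductSpace ℝ H]
    [CompleteSpace H]
    (P : H →L[ℝ] H) (hP : P.comp P = P)
    (hP0 : P ≠ 0) (hPid : P ≠ ContinuousLinearMap.id ℝ H) :
    ‖ContinuousLinearMap.id ℝ H - P‖ = ‖P‖ :=
  stmt_10_general P hP hP0 hPid
end
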